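/- For any two policies π' and π and any auxiliary cost function C_i, with ε_{C_i}^{π'} = max_s |E_{a∼π'(·|s)}[A_{C_i}^π(s,a)]|, the following upper bound holds: J_{C_i}(π') - J_{C_i}(π) ≤ (1/(1-γ)) · E_{s∼d^π, a∼π'(·|s)}[A_{C_i}^π(s,a) + (2γ ε_{C_i}^{π'}/(1-γ)) D_TV(π'‖π)[s]]. -/

import Mathlib

open BigOperators Finset Matrix

noncomputable section

variable {S A : Type*}

/-- Policy transition matrix (column-stochastic): entry `(s', s)` is
`P_pol(s'|s) = ∑ a, P(s'|s,a) pol(a|s)`. -/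
def Pmat [Fintype A] (P : S → A → S → ℝ) (pol : S → A → ℝ) : Matrix S S ℝ :=
  fun s' s => ∑ a, P s a s' * pol s a

/-- Discounted future state distribution `d^π = (1-γ) ∑_t γ^t P_π^t μ`. -/
def dFut [Fintype S] [DecidableEq S] [Fintype A] (γ : ℝ) (P : S → A → S → ℝ)
    (μ : S → ℝ) (pol : S → A → ℝ) : S → ℝ :=
  fun s => (1 - γ) * ∑' t : ℕ, γ ^ t * ((Pmat P pol ^ t) *ᵥ μ) s

/-- Discounted return `J(π)` (also used as the cost return `J_C(π)` with a cost `C`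
in place of the reward `R`). -/
def Jret [Fintype S] [DecidableEq S] [Fintype A] (γ : ℝ) (P : S → A → S → ℝ)
    (R : S → A → S → ℝ) (μ : S → ℝ) (pol : S → A → ℝ) : ℝ :=
  (1 / (1 - γ)) * ∑ s, dFut γ P μ pol s * (∑ a, pol s a * (∑ s', P s a s' * R s a s'))

/-- Total variational divergence between action distributions at state `s`. -/
def DTV [Fintype A] (pol' pol : S → A → ℝ) (s : S) : ℝ :=
  (1 / 2) * ∑ a, |pol' s a - pol s a|

/-- Kullback–Leibler divergence between action distributions at state `s`. -/
def DKL [Fintype A] (pol' pol : S → A → ℝ) (s : S) : ℝ :=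
  ∑ a, pol' s a * Real.log (pol' s a / pol s a)

/-- Advantage function `A^π(s,a) = Q^π(s,a) - V^π(s)` built from a value function `V`
(also used for cost advantages with a cost `C` in place of `R`). -/
def Adv [Fintype S] (γ : ℝ) (P : S → A → S → ℝ) (R : S → A → S → ℝ)
    (V : S → ℝ) (s : S) (a : A) : ℝ :=
  (∑ s', P s a s' * (R s a s' + γ * V s')) - V s

/-- `ε_f^{π'} = max_s |E_{a∼π'(·|s), s'∼P}[δ_f(s,a,s')]|` where
`δ_f(s,a,s') = R(s,a,s') + γ f(s') - f(s)`. -/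
def epsF [Fintype S] [Fintype A] (γ : ℝ) (P : S → A → S → ℝ) (R : S → A → S → ℝ)
    (f : S → ℝ) (pol' : S → A → ℝ) : ℝ :=
  ⨆ s, |∑ a, pol' s a * (∑ s', P s a s' * (R s a s' + γ * f s' - f s))|

/-- Surrogate `L_{π,f}(π') = E_{s∼d^π, a∼π, s'∼P}[(π'(a|s)/π(a|s) - 1) δ_f(s,a,s')]`. -/
def Lsurr [Fintype S] [DecidableEq S] [Fintype A] (γ : ℝ) (P : S → A → S → ℝ)
    (R : S → A → S → ℝ) (μ : S → ℝ) (f : S → ℝ) (pol pol' : S → A → ℝ) : ℝ :=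
  ∑ s, dFut γ P μ pol s * (∑ a, pol s a * (∑ s', P s a s' *
    ((pol' s a / pol s a - 1) * (R s a s' + γ * f s' - f s))))

/-!
Write `Ā'(s) = E_{a∼π'(·|s)}[A^π(s,a)]`. The performance difference identity
`J(π') - J(π) = (1-γ)⁻¹ E_{s∼d^{π'}}[Ā'(s)]` follows from the fixed-point equation
`d^q = (1-γ) μ + γ P_q d^q` of the discounted state distribution together with the Bellman
equation for `V^π`. Replacing `d^{π'}` by `d^π` costs at most `‖d^{π'} - d^π‖₁ · max_s |Ā'(s)|`,
and subtracting the two fixed-point equations gives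
`d^{π'} - d^π = γ P_{π'} (d^{π'} - d^π) + γ (P_{π'} - P_π) d^π`; as `P_{π'}` is column
stochastic this yields `‖d^{π'} - d^π‖₁ ≤ 2γ/(1-γ) E_{s∼d^π}[D_TV(π'‖π)[s]]`.
-/

namespace Matrix

variable {n : Type*} [Fintype n] [DecidableEq n] {M : Matrix n n ℝ}

lemma mulVec_mem_stdSimplex (hM : M ∈ colStochastic ℝ n) {x : n → ℝ}
    (hx : x ∈ stdSimplex ℝ n) : M *ᵥ x ∈ stdSimplex ℝ n :=
  ⟨nonneg_mulVec_of_mem_colStochastic hM hx.1, (sum_mulVec_of_mem_colStochastic hM).trans hx.2⟩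

lemma sum_abs_mulVec_le (hM : M ∈ colStochastic ℝ n) (x : n → ℝ) :
    ∑ i, |(M *ᵥ x) i| ≤ ∑ i, |x i| :=
  calc ∑ i, |(M *ᵥ x) i| ≤ ∑ i, (M *ᵥ fun j => |x j|) i :=
        Finset.sum_le_sum fun i _ => (Finset.abs_sum_le_sum_abs _ _).trans_eq <| by
          simp only [abs_mul, abs_of_nonneg (nonneg_of_mem_colStochastic hM), mulVec, dotProduct]
    _ = ∑ i, |x i| := sum_mulVec_of_mem_colStochastic hM

lemma hasSum_geometric_pow_mulVec {γ : ℝ} (hγ0 : 0 ≤ γ) (hγ1 : γ < 1)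
    (hM : M ∈ colStochastic ℝ n) {μ : n → ℝ} (hμ : μ ∈ stdSimplex ℝ n) :
    HasSum (fun t : ℕ => γ ^ t • ((M ^ t) *ᵥ μ)) fun i => ∑' t : ℕ, γ ^ t * ((M ^ t) *ᵥ μ) i := by
  refine Pi.hasSum.2 fun i => Summable.hasSum ?_
  have hmem (t : ℕ) := mem_Icc_of_mem_stdSimplex (mulVec_mem_stdSimplex (pow_mem hM t) hμ) i
  exact .of_nonneg_of_le (fun t => mul_nonneg (pow_nonneg hγ0 t) (hmem t).1)
    (fun t => mul_le_of_le_one_right (pow_nonneg hγ0 t) (hmem t).2)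
    (summable_geometric_of_lt_one hγ0 hγ1)

lemma tsum_geometric_pow_mulVec_eq {γ : ℝ} (hγ0 : 0 ≤ γ) (hγ1 : γ < 1)
    (hM : M ∈ colStochastic ℝ n) {μ : n → ℝ} (hμ : μ ∈ stdSimplex ℝ n) :
    (fun i => ∑' t : ℕ, γ ^ t * ((M ^ t) *ᵥ μ) i)
      = μ + γ • (M *ᵥ fun i => ∑' t : ℕ, γ ^ t * ((M ^ t) *ᵥ μ) i) := by
  have hF := hasSum_geometric_pow_mulVec hγ0 hγ1 hM hμ
  have hshift : HasSum (fun t : ℕ => γ ^ (t + 1) • ((M ^ (t + 1)) *ᵥ μ))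
      (γ • (M *ᵥ fun i => ∑' t : ℕ, γ ^ t * ((M ^ t) *ᵥ μ) i)) := by
    convert (hF.map M.mulVecLin (LinearMap.continuous_of_finiteDimensional _)).const_smul γ
      using 1
    · ext1 t
      simp [pow_succ', ← mulVec_mulVec, smul_smul]
    · rw [mulVecLin_apply]
  have := ((hasSum_nat_add_iff' 1).2 hF).unique hshift
  simp only [Finset.range_one, Finset.sum_singleton, pow_zero, one_smul, one_mulVec] at this
  rw [← this, add_sub_cancel]

end Matrix

lemma sum_mul_le_sum_abs_mul_iSup_abs {ι : Type*} [Fintype ι] (x y : ι → ℝ) :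
    ∑ s, x s * y s ≤ (∑ s, |x s|) * ⨆ s, |y s| := by
  rw [sum_mul]
  refine sum_le_sum fun s _ => (le_abs_self _).trans ?_
  rw [abs_mul]
  exact mul_le_mul_of_nonneg_left
    (le_ciSup (f := fun s => |y s|) (Set.finite_range _).bddAbove s) (abs_nonneg _)

section MarkovDecisionProcess

variable [Fintype A] {P : S → A → S → ℝ} {q q' : S → A → ℝ}

lemma Pmat_sub : Pmat P q' - Pmat P q = Pmat P (q' - q) := by
  ext
  simp [Pmat, mul_sub]

variable [Fintype S]

lemma Pmat_mem_colStochastic [DecidableEq S] (hP0 : ∀ s a s', 0 ≤ P s a s')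
    (hP1 : ∀ s a, ∑ s', P s a s' = 1) (hq0 : ∀ s a, 0 ≤ q s a) (hq1 : ∀ s, ∑ a, q s a = 1) :
    Pmat P q ∈ colStochastic ℝ S := by
  refine mem_colStochastic_iff_sum.2
    ⟨fun _ _ => sum_nonneg fun _ _ => mul_nonneg (hP0 ..) (hq0 ..), fun s => ?_⟩
  simp only [Pmat]
  rw [sum_comm]
  simp [← sum_mul, hP1, hq1]

lemma sum_abs_Pmat_mulVec_le (hP0 : ∀ s a s', 0 ≤ P s a s') (hP1 : ∀ s a, ∑ s', P s a s' = 1)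
    (w : S → A → ℝ) (x : S → ℝ) :
    ∑ s, |(Pmat P w *ᵥ x) s| ≤ ∑ s, |x s| * ∑ a, |w s a| :=
  calc ∑ s, |(Pmat P w *ᵥ x) s| ≤ ∑ s, ∑ s', ∑ a, P s' a s * (|w s' a| * |x s'|) := by
        refine sum_le_sum fun s _ => (abs_sum_le_sum_abs _ _).trans <|
          sum_le_sum fun s' _ => ?_
        simp only [Pmat, sum_mul]
        exact (abs_sum_le_sum_abs _ _).trans_eq <| by
          simp only [abs_mul, abs_of_nonneg (hP0 ..), mul_assoc]
    _ = ∑ s', ∑ a, (∑ s, P s' a s) * (|w s' a| * |x s'|) := by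
        rw [sum_comm]
        exact sum_congr rfl fun _ _ => by rw [sum_comm]; simp only [sum_mul]
    _ = ∑ s, |x s| * ∑ a, |w s a| := by simp [hP1, mul_sum, mul_comm]

variable {γ : ℝ} {C : S → A → S → ℝ} {V : S → ℝ}

lemma sum_mul_Adv_eq (hq1 : ∀ s, ∑ a, q s a = 1) (s : S) :
    ∑ a, q s a * Adv γ P C V s a
      = ∑ a, q s a * ∑ s', P s a s' * C s a s' + γ * (V ᵥ* Pmat P q) s - V s := by
  have hnext : ∑ a, q s a * ∑ s', P s a s' * V s' = (V ᵥ* Pmat P q) s := by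
    simp only [vecMul, dotProduct, Pmat, mul_sum]
    rw [sum_comm]
    exact sum_congr rfl fun _ _ => sum_congr rfl fun _ _ => by ring
  simp only [Adv, mul_sub, mul_add, sum_sub_distrib, sum_add_distrib, ← sum_mul, hq1,
    one_mul, mul_left_comm _ γ, ← mul_sum, hnext]

lemma sum_mul_Adv_eq_zero_of_bellman (hq1 : ∀ s, ∑ a, q s a = 1)
    (hV : ∀ s, V s = ∑ a, q s a * ∑ s', P s a s' * (C s a s' + γ * V s')) (s : S) :
    ∑ a, q s a * Adv γ P C V s a = 0 := by
  simp only [Adv, mul_sub, sum_sub_distrib, ← sum_mul, hq1, one_mul, ← hV, sub_self]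

variable [DecidableEq S] {μ : S → ℝ}

lemma dFut_nonneg (hγ0 : 0 ≤ γ) (hγ1 : γ < 1) (hμ : μ ∈ stdSimplex ℝ S)
    (hM : Pmat P q ∈ colStochastic ℝ S) (s : S) : 0 ≤ dFut γ P μ q s :=
  mul_nonneg (sub_nonneg.2 hγ1.le) <| tsum_nonneg fun t =>
    mul_nonneg (pow_nonneg hγ0 t) ((mulVec_mem_stdSimplex (pow_mem hM t) hμ).1 s)

lemma dFut_eq (hγ0 : 0 ≤ γ) (hγ1 : γ < 1) (hμ : μ ∈ stdSimplex ℝ S)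
    (hM : Pmat P q ∈ colStochastic ℝ S) :
    dFut γ P μ q = (1 - γ) • μ + γ • (Pmat P q *ᵥ dFut γ P μ q) := by
  have h := congrArg ((1 - γ) • ·) (tsum_geometric_pow_mulVec_eq hγ0 hγ1 hM hμ)
  rw [smul_add, smul_comm, ← mulVec_smul] at h
  exact h

lemma Jret_eq_add (hγ0 : 0 ≤ γ) (hγ1 : γ < 1) (hμ : μ ∈ stdSimplex ℝ S)
    (hM : Pmat P q ∈ colStochastic ℝ S) (hq1 : ∀ s, ∑ a, q s a = 1) :
    Jret γ P C μ q
      = μ ⬝ᵥ V + 1 / (1 - γ) * ∑ s, dFut γ P μ q s * ∑ a, q s a * Adv γ P C V s a := by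
  set d := dFut γ P μ q
  set r : S → ℝ := fun s => ∑ a, q s a * ∑ s', P s a s' * C s a s'
  have hμd : (1 - γ) • μ = d - γ • (Pmat P q *ᵥ d) :=
    eq_sub_of_add_eq (dFut_eq hγ0 hγ1 hμ hM).symm
  have hadv : ∑ s, d s * ∑ a, q s a * Adv γ P C V s a = d ⬝ᵥ r - (1 - γ) * (μ ⬝ᵥ V) :=
    calc _ = d ⬝ᵥ (r + γ • (V ᵥ* Pmat P q) - V) := by
          simp only [sum_mul_Adv_eq hq1]
          rfl
      _ = d ⬝ᵥ r - V ⬝ᵥ (d - γ • (Pmat P q *ᵥ d)) := by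
          rw [dotProduct_sub, dotProduct_add, dotProduct_smul, dotProduct_comm d (V ᵥ* _),
            ← dotProduct_mulVec, dotProduct_sub V, dotProduct_smul, dotProduct_comm d V]
          ring
      _ = _ := by rw [← hμd, dotProduct_smul, smul_eq_mul, dotProduct_comm V μ]
  have hγ : 1 - γ ≠ 0 := (sub_pos.2 hγ1).ne'
  change 1 / (1 - γ) * (d ⬝ᵥ r) = _
  rw [hadv]
  field_simp
  ring

lemma Jret_sub_Jret (hγ0 : 0 ≤ γ) (hγ1 : γ < 1) (hμ : μ ∈ stdSimplex ℝ S)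
    (hM : Pmat P q ∈ colStochastic ℝ S) (hM' : Pmat P q' ∈ colStochastic ℝ S)
    (hq1 : ∀ s, ∑ a, q s a = 1) (hq'1 : ∀ s, ∑ a, q' s a = 1)
    (hV : ∀ s, V s = ∑ a, q s a * ∑ s', P s a s' * (C s a s' + γ * V s')) :
    Jret γ P C μ q' - Jret γ P C μ q
      = 1 / (1 - γ) * ∑ s, dFut γ P μ q' s * ∑ a, q' s a * Adv γ P C V s a := by
  rw [Jret_eq_add hγ0 hγ1 hμ hM hq1 (V := V), Jret_eq_add hγ0 hγ1 hμ hM' hq'1 (V := V)]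
  simp [sum_mul_Adv_eq_zero_of_bellman hq1 hV]

lemma sum_abs_dFut_sub_le (hγ0 : 0 ≤ γ) (hγ1 : γ < 1) (hμ : μ ∈ stdSimplex ℝ S)
    (hP0 : ∀ s a s', 0 ≤ P s a s') (hP1 : ∀ s a, ∑ s', P s a s' = 1)
    (hM : Pmat P q ∈ colStochastic ℝ S) (hM' : Pmat P q' ∈ colStochastic ℝ S) :
    ∑ s, |dFut γ P μ q' s - dFut γ P μ q s|
      ≤ 2 * γ / (1 - γ) * ∑ s, dFut γ P μ q s * DTV q' q s := by
  set d := dFut γ P μ q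
  set d' := dFut γ P μ q'
  have hd (s : S) : 0 ≤ d s := dFut_nonneg hγ0 hγ1 hμ hM s
  have hdiff : d' - d = γ • (Pmat P q' *ᵥ (d' - d)) + γ • (Pmat P (q' - q) *ᵥ d) := by
    have h := dFut_eq hγ0 hγ1 hμ hM
    have h' := dFut_eq hγ0 hγ1 hμ hM'
    rw [← Pmat_sub, sub_mulVec, mulVec_sub]
    linear_combination (norm := module) h' - h
  have hshift : ∑ s, |(Pmat P (q' - q) *ᵥ d) s| ≤ 2 * ∑ s, d s * DTV q' q s := by
    refine (sum_abs_Pmat_mulVec_le hP0 hP1 _ d).trans_eq ?_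
    rw [mul_sum]
    exact sum_congr rfl fun s _ => by simp only [DTV, Pi.sub_apply, abs_of_nonneg (hd s)]; ring
  have hrec : ∑ s, |(d' - d) s| ≤ γ * ∑ s, |(d' - d) s| + γ * (2 * ∑ s, d s * DTV q' q s) :=
    calc ∑ s, |(d' - d) s|
        ≤ ∑ s, (γ * |(Pmat P q' *ᵥ (d' - d)) s| + γ * |(Pmat P (q' - q) *ᵥ d) s|) := by
          refine sum_le_sum fun s _ => ?_
          have hs := congrFun hdiff s
          simp only [Pi.add_apply, Pi.smul_apply, smul_eq_mul] at hs
          rw [hs, ← abs_of_nonneg hγ0, ← abs_mul, ← abs_mul, abs_of_nonneg hγ0]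
          exact abs_add_le _ _
      _ ≤ _ := by
          rw [sum_add_distrib, ← mul_sum, ← mul_sum]
          exact add_le_add (mul_le_mul_of_nonneg_left (sum_abs_mulVec_le hM' _) hγ0)
            (mul_le_mul_of_nonneg_left hshift hγ0)
  rw [div_mul_eq_mul_div, le_div_iff₀ (sub_pos.2 hγ1)]
  simp only [Pi.sub_apply] at hrec
  linarith

lemma sum_dFut_mul_le (hγ0 : 0 ≤ γ) (hγ1 : γ < 1) (hμ : μ ∈ stdSimplex ℝ S)
    (hP0 : ∀ s a s', 0 ≤ P s a s') (hP1 : ∀ s a, ∑ s', P s a s' = 1)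
    (hM : Pmat P q ∈ colStochastic ℝ S) (hM' : Pmat P q' ∈ colStochastic ℝ S) (f : S → ℝ) :
    ∑ s, dFut γ P μ q' s * f s
      ≤ ∑ s, dFut γ P μ q s * f s
        + 2 * γ * (⨆ s, |f s|) / (1 - γ) * ∑ s, dFut γ P μ q s * DTV q' q s := by
  have hshift :=
    calc ∑ s, (dFut γ P μ q' s - dFut γ P μ q s) * f s
        ≤ (∑ s, |dFut γ P μ q' s - dFut γ P μ q s|) * ⨆ s, |f s| :=
          sum_mul_le_sum_abs_mul_iSup_abs _ _
      _ ≤ (2 * γ / (1 - γ) * ∑ s, dFut γ P μ q s * DTV q' q s) * ⨆ s, |f s| :=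
          mul_le_mul_of_nonneg_right (sum_abs_dFut_sub_le hγ0 hγ1 hμ hP0 hP1 hM hM')
            (Real.iSup_nonneg fun _ => abs_nonneg _)
      _ = 2 * γ * (⨆ s, |f s|) / (1 - γ) * ∑ s, dFut γ P μ q s * DTV q' q s := by ring
  simp only [sub_mul, sum_sub_distrib] at hshift
  linarith

end MarkovDecisionProcess

theorem cost_return_upper_bound_general
    [Fintype S] [DecidableEq S] [Fintype A]
    (γ : ℝ) (hγ0 : 0 ≤ γ) (hγ1 : γ < 1)
    (P : S → A → S → ℝ) (hP0 : ∀ s a s', 0 ≤ P s a s')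
    (hP1 : ∀ s a, (∑ s', P s a s') = 1)
    (μ : S → ℝ) (hμ0 : ∀ s, 0 ≤ μ s) (hμ1 : (∑ s, μ s) = 1)
    (C : S → A → S → ℝ)
    (pol pol' : S → A → ℝ)
    (hpol0 : ∀ s a, 0 ≤ pol s a) (hpol1 : ∀ s, (∑ a, pol s a) = 1)
    (hpol'0 : ∀ s a, 0 ≤ pol' s a) (hpol'1 : ∀ s, (∑ a, pol' s a) = 1)
    (VC : S → ℝ)
    (hVC : ∀ s, VC s = ∑ a, pol s a * (∑ s', P s a s' * (C s a s' + γ * VC s'))) :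
    Jret γ P C μ pol' - Jret γ P C μ pol
      ≤ (1 / (1 - γ)) * ∑ s, dFut γ P μ pol s *
          (∑ a, pol' s a *
            (Adv γ P C VC s a
              + 2 * γ * (⨆ t, |∑ a', pol' t a' * Adv γ P C VC t a'|) / (1 - γ)
                  * DTV pol' pol s)) := by
  have hμ : μ ∈ stdSimplex ℝ S := ⟨hμ0, hμ1⟩
  have hM := Pmat_mem_colStochastic hP0 hP1 hpol0 hpol1
  have hM' := Pmat_mem_colStochastic hP0 hP1 hpol'0 hpol'1
  rw [Jret_sub_Jret hγ0 hγ1 hμ hM hM' hpol1 hpol'1 hVC]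
  refine mul_le_mul_of_nonneg_left ?_ (one_div_nonneg.2 (sub_nonneg.2 hγ1.le))
  simp only [mul_add, sum_add_distrib, ← sum_mul, hpol'1, one_mul]
  refine (sum_dFut_mul_le hγ0 hγ1 hμ hP0 hP1 hM hM' _).trans_eq ?_
  rw [mul_sum]
  exact congrArg _ (sum_congr rfl fun _ _ => by ring)

/-- **Corollary 2.** For any two policies and any auxiliary cost `C`, with
`ε_C^{π'} = max_s |E_{a∼π'}[A_C^π(s,a)]|`,
`J_C(π') - J_C(π) ≤ (1/(1-γ)) E_{s∼d^π, a∼π'}[A_C^π(s,a) + (2γε_C^{π'}/(1-γ)) D_TV(π'‖π)[s]]`. -/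
theorem cost_return_upper_bound
    [Fintype S] [DecidableEq S] [Nonempty S] [Fintype A] [Nonempty A]
    (γ : ℝ) (hγ0 : 0 ≤ γ) (hγ1 : γ < 1)
    (P : S → A → S → ℝ) (hP0 : ∀ s a s', 0 ≤ P s a s')
    (hP1 : ∀ s a, (∑ s', P s a s') = 1)
    (μ : S → ℝ) (hμ0 : ∀ s, 0 ≤ μ s) (hμ1 : (∑ s, μ s) = 1)
    (C : S → A → S → ℝ)
    (pol pol' : S → A → ℝ)
    (hpol0 : ∀ s a, 0 ≤ pol s a) (hpol1 : ∀ s, (∑ a, pol s a) = 1)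
    (hpol'0 : ∀ s a, 0 ≤ pol' s a) (hpol'1 : ∀ s, (∑ a, pol' s a) = 1)
    (VC : S → ℝ)
    (hVC : ∀ s, VC s = ∑ a, pol s a * (∑ s', P s a s' * (C s a s' + γ * VC s'))) :
    Jret γ P C μ pol' - Jret γ P C μ pol
      ≤ (1 / (1 - γ)) * ∑ s, dFut γ P μ pol s *
          (∑ a, pol' s a *
            (Adv γ P C VC s a
              + 2 * γ * (⨆ t, |∑ a', pol' t a' * Adv γ P C VC t a'|) / (1 - γ)
                  * DTV pol' pol s)) :=
  cost_return_upper_bound_general γ hγ0 hγ1 P hP0 hP1 μ hμ0 hμ1 C pol pol' hpol0 hpol1 hpol'0 hpol'1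
    VC hVC
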